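/- arXiv:2009.02161 — 2 statements merged into one kernel-verified Lean document; each statement's English description precedes it below -/
import Mathlib

section
/- Disjointness of the 'at least' and 'strictly above' subposets attached to two disjoint unions of blocks: let Q be a finite poset, G a group, P : Q → Subgroup G monotone, and let Ω be a subset of Q on which P is constant (P_U = P_{U'} for all U, U' ∈ Ω). Suppose Ω = C ⊔ R where C is a block and R is a union of blocks. Define Q_{≥C} = {V : ∃ U ∈ C, U ≤ V}, Q_{>C} = {V : ∃ U ∈ C, U ≤ V and P_U < P_V}, and similarly for R. Then Q_{≥C} ∩ Q_{≥R} = Q_{>C} ∩ Q_{>R}. -/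
/-- Disjointness of the `≥` and `>` subposets attached to a disjoint decomposition
`Ω = C ⊔ R` of a set with constant local group, where `C` is a block and `R` is a union of
blocks: `Q_{≥C} ∩ Q_{≥R} = Q_{>C} ∩ Q_{>R}`. -/
theorem stmt_7 {Q : Type*} [PartialOrder Q] [Finite Q] {G : Type*} [Group G]
    (P : Q → Subgroup G) (hmono : Monotone P)
    (Ω C R : Set Q)
    (hconst : ∀ U ∈ Ω, ∀ U' ∈ Ω, P U = P U')
    (hunion : Ω = C ∪ R) (hdisj : Disjoint C R)
    (hCblock : ∃ J₀ : Q, C = {J | Relation.EqvGen (fun a b => a ≤ b ∧ P a = P b) J₀ J})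
    (hRblocks : ∀ J ∈ R, {J' | Relation.EqvGen (fun a b => a ≤ b ∧ P a = P b) J J'} ⊆ R) :
    {V | ∃ U ∈ C, U ≤ V} ∩ {V | ∃ U ∈ R, U ≤ V} =
      {V | ∃ U ∈ C, U ≤ V ∧ P U < P V} ∩ {V | ∃ U ∈ R, U ≤ V ∧ P U < P V} := by
  obtain ⟨J₀, hC⟩ := hCblock
  ext V
  simp only [Set.mem_inter_iff, Set.mem_setOf_eq]
  constructor
  · rintro ⟨⟨U, hUC, hUV⟩, ⟨U', hUR, hU'V⟩⟩
    have hUΩ : U ∈ Ω := hunion ▸ Or.inl hUC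
    have hU'Ω : U' ∈ Ω := hunion ▸ Or.inr hUR
    -- if P U = P V then V ∈ C, and then since P U' = P U = P V, V ∈ R : contradiction
    have key : P U ≠ P V := by
      intro hPE
      have hVC : V ∈ C := by
        rw [hC]
        exact Relation.EqvGen.trans _ _ _ (by rw [hC] at hUC; exact hUC) (Relation.EqvGen.rel _ _ ⟨hUV, hPE⟩)
      have hVR : V ∈ R := hRblocks U' hUR
        (Relation.EqvGen.rel _ _ ⟨hU'V, (hconst U' hU'Ω U hUΩ).trans hPE⟩)
      exact hdisj.ne_of_mem hVC hVR rfl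
    have key' : P U' ≠ P V := fun h => key ((hconst U hUΩ U' hU'Ω).trans h)
    exact ⟨⟨U, hUC, hUV, lt_of_le_of_ne (hmono hUV) key⟩,
      ⟨U', hUR, hU'V, lt_of_le_of_ne (hmono hU'V) key'⟩⟩
  · rintro ⟨⟨U, hUC, hUV, _⟩, ⟨U', hUR, hU'V, _⟩⟩
    exact ⟨⟨U, hUC, hUV⟩, ⟨U', hUR, hU'V⟩⟩
end

section
/- Direct sum decomposition over blocks: let Q be a finite poset, G a group, P : Q → Subgroup G monotone, and Ω ⊆ Q a subset with P constant on Ω that is a disjoint union of blocks C₁, …, C_r. With K = |Q| the order complex and K_Ω = |{V : ∃U ∈ Ω, U ≤ V}|, K_{>Ω} = |{V : ∃U ∈ Ω, U ≤ V and P_U < P_V}| (and similarly for each C_i), the relative simplicial cohomology satisfies H^n(K_Ω, K_{>Ω}; ℤ) ≅ ⊕_{i=1}^{r} H^n(K_{C_i}, K_{>C_i}; ℤ) for all n ≥ 0. -/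
/-- A relative simplex of the pair of full subcomplexes `(K_A, K_B)` of the order complex
of `Q` spanned by vertex sets `B ⊆ A`: a chain in `A` with at least one vertex outside `B`,
with `n + 1` vertices. -/
def RelSimp {Q : Type*} [PartialOrder Q] (A B : Set Q) (n : ℤ) : Type _ :=
  {l : List Q // l.Chain' (· < ·) ∧ (∀ x ∈ l, x ∈ A) ∧ (∃ x ∈ l, x ∉ B) ∧
    (l.length : ℤ) = n + 1}

/-- Relative simplicial `n`-cochains of the pair `(K_A, K_B)`. -/
abbrev RelCochain {Q : Type*} [PartialOrder Q] (A B : Set Q) (n : ℤ) : Type _ :=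
  RelSimp A B n → ℤ

open Classical in
/-- The relative simplicial coboundary map (faces lying entirely in `K_B` contribute 0). -/
noncomputable def relDelta {Q : Type*} [PartialOrder Q] (A B : Set Q) (n : ℤ) :
    RelCochain A B n →+ RelCochain A B (n + 1) :=
  AddMonoidHom.mk'
    (fun f l => ∑ i ∈ Finset.range l.1.length, (-1 : ℤ) ^ i *
      (if h : (l.1.eraseIdx i).Chain' (· < ·) ∧ (∀ x ∈ l.1.eraseIdx i, x ∈ A) ∧
          (∃ x ∈ l.1.eraseIdx i, x ∉ B) ∧ ((l.1.eraseIdx i).length : ℤ) = n + 1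
        then f ⟨l.1.eraseIdx i, h⟩ else 0))
    (by
      intro f g
      funext l
      show (∑ i ∈ _, _ : ℤ) = (∑ i ∈ _, _ : ℤ) + (∑ i ∈ _, _ : ℤ)
      rw [← Finset.sum_add_distrib]
      refine Finset.sum_congr rfl fun i _ => ?_
      split
      · exact mul_add _ _ _
      · simp)

/-- The relative simplicial cohomology `H^n(K_A, K_B; ℤ)` of the pair of full subcomplexes
of the order complex of `Q` spanned by the vertex sets `B ⊆ A`. -/
noncomputable def relCoh {Q : Type*} [PartialOrder Q] (A B : Set Q) (n : ℤ) : Type _ :=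
  (AddMonoidHom.ker (relDelta A B (n - 1 + 1))) ⧸
    ((AddMonoidHom.range (relDelta A B (n - 1))).addSubgroupOf
      (AddMonoidHom.ker (relDelta A B (n - 1 + 1))))

noncomputable instance {Q : Type*} [PartialOrder Q] (A B : Set Q) (n : ℤ) :
    AddCommGroup (relCoh A B n) := by
  unfold relCoh; infer_instance

/-!
A relative simplex of `(K_Ω, K_{>Ω})` is a chain with a vertex `x ∉ K_{>Ω}`. Such an `x` has the
same group as some `U ∈ Ω` below it, hence lies in the block `C_i` of `U`, and then so does
every vertex of the chain below `x` (its group is squeezed between `P U` and `P x`); so the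
chain lies in `K_{C_i}`, for a unique `i` since the blocks are disjoint. For chains in
`K_{C_i}`, lying in `K_{>Ω}` is the same as lying in `K_{>C_i}`, because `P` is constant on `Ω`.
Hence the relative cochain complex of `(K_Ω, K_{>Ω})` is the product of those of the
`(K_{C_i}, K_{>C_i})`, and cohomology commutes with products.
-/

section KerModRange

variable {A B C A' B' C' : Type*} [AddCommGroup A] [AddCommGroup B] [AddCommGroup C]
  [AddCommGroup A'] [AddCommGroup B'] [AddCommGroup C']

/-- `relCoh A B n` unfolds to `KerModRange (relDelta A B (n - 1)) (relDelta A B (n - 1 + 1))`. -/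
abbrev KerModRange (d₀ : A →+ B) (d₁ : B →+ C) : Type _ :=
  d₁.ker ⧸ d₀.range.addSubgroupOf d₁.ker

lemma AddMonoidHom.ker_map_addEquiv {d₁ : B →+ C} {d₁' : B' →+ C'} (β : B ≃+ B') (γ : C ≃+ C')
    (h₁ : ∀ b, γ (d₁ b) = d₁' (β b)) : d₁.ker.map β.toAddMonoidHom = d₁'.ker := by
  ext b
  rw [AddSubgroup.mem_map_equiv, AddMonoidHom.mem_ker, AddMonoidHom.mem_ker, ← γ.map_eq_zero_iff,
    h₁, β.apply_symm_apply]

lemma AddMonoidHom.range_map_addEquiv {d₀ : A →+ B} {d₀' : A' →+ B'} (α : A ≃+ A') (β : B ≃+ B')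
    (h₀ : ∀ a, β (d₀ a) = d₀' (α a)) : d₀.range.map β.toAddMonoidHom = d₀'.range := by
  ext b
  simp only [AddSubgroup.mem_map, AddMonoidHom.mem_range]
  constructor
  · rintro ⟨_, ⟨a, rfl⟩, rfl⟩
    exact ⟨α a, (h₀ a).symm⟩
  · rintro ⟨a', rfl⟩
    exact ⟨d₀ (α.symm a'), ⟨_, rfl⟩, by simp [h₀]⟩

noncomputable def KerModRange.congr {d₀ : A →+ B} {d₁ : B →+ C} {d₀' : A' →+ B'}
    {d₁' : B' →+ C'} (α : A ≃+ A') (β : B ≃+ B') (γ : C ≃+ C')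
    (h₀ : ∀ a, β (d₀ a) = d₀' (α a)) (h₁ : ∀ b, γ (d₁ b) = d₁' (β b)) :
    KerModRange d₀ d₁ ≃+ KerModRange d₀' d₁' :=
  let e : d₁.ker ≃+ d₁'.ker := (β.addSubgroupMap d₁.ker).trans
    (AddEquiv.addSubgroupCongr (AddMonoidHom.ker_map_addEquiv β γ h₁))
  QuotientAddGroup.congr _ _ e <| by
    ext b
    change b ∈ AddSubgroup.map e.toAddMonoidHom _ ↔ _
    rw [AddSubgroup.mem_map_equiv, AddSubgroup.mem_addSubgroupOf, AddSubgroup.mem_addSubgroupOf,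
      ← AddMonoidHom.range_map_addEquiv α β h₀, AddSubgroup.mem_map_equiv]
    rfl

variable {ι : Type*} {A B C : ι → Type*} [∀ i, AddCommGroup (A i)] [∀ i, AddCommGroup (B i)]
  [∀ i, AddCommGroup (C i)] (d₀ : ∀ i, A i →+ B i) (d₁ : ∀ i, B i →+ C i)

lemma AddMonoidHom.mem_ker_piMap_apply {f : ∀ i, B i} (hf : f ∈ (AddMonoidHom.piMap d₁).ker)
    (i : ι) : f i ∈ (d₁ i).ker :=
  congrFun hf i

def KerModRange.piProj : (AddMonoidHom.piMap d₁).ker →+ ∀ i, KerModRange (d₀ i) (d₁ i) where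
  toFun f i := QuotientAddGroup.mk ⟨f.1 i, AddMonoidHom.mem_ker_piMap_apply d₁ f.2 i⟩
  map_zero' := rfl
  map_add' _ _ := rfl

lemma KerModRange.piProj_apply (f : (AddMonoidHom.piMap d₁).ker) (i : ι) :
    KerModRange.piProj d₀ d₁ f i =
      QuotientAddGroup.mk ⟨f.1 i, AddMonoidHom.mem_ker_piMap_apply d₁ f.2 i⟩ :=
  rfl

lemma KerModRange.piProj_surjective : Function.Surjective (KerModRange.piProj d₀ d₁) := by
  intro g
  choose c hc using fun i => QuotientAddGroup.mk_surjective (g i)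
  exact ⟨⟨fun i => c i, funext fun i => (c i).2⟩, funext hc⟩

lemma KerModRange.ker_piProj :
    (KerModRange.piProj d₀ d₁).ker =
      (AddMonoidHom.piMap d₀).range.addSubgroupOf (AddMonoidHom.piMap d₁).ker := by
  ext f
  simp only [AddMonoidHom.mem_ker, AddSubgroup.mem_addSubgroupOf, AddMonoidHom.mem_range,
    funext_iff, Pi.zero_apply, KerModRange.piProj_apply, QuotientAddGroup.eq_zero_iff,
    AddMonoidHom.piMap_apply]
  exact ⟨fun h => ⟨fun i => (h i).choose, fun i => (h i).choose_spec⟩,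
    fun ⟨a, ha⟩ i => ⟨a i, ha i⟩⟩

noncomputable def KerModRange.piEquiv :
    KerModRange (AddMonoidHom.piMap d₀) (AddMonoidHom.piMap d₁) ≃+
      ∀ i, KerModRange (d₀ i) (d₁ i) :=
  QuotientAddGroup.liftEquiv _ (KerModRange.piProj_surjective d₀ d₁)
    (KerModRange.ker_piProj d₀ d₁).symm

end KerModRange

section RelativePairs

variable {Q : Type*} [PartialOrder Q]

lemma List.IsChain.le_or_ge_of_mem {l : List Q} (hl : l.IsChain (· < ·)) {x y : Q}
    (hx : x ∈ l) (hy : y ∈ l) : x ≤ y ∨ y ≤ x := by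
  rcases eq_or_ne x y with rfl | hne
  · exact Or.inl le_rfl
  · have : Std.Symm fun a b : Q => a ≤ b ∨ b ≤ a := ⟨fun _ _ => Or.symm⟩
    have hcomp : l.Pairwise fun a b => a ≤ b ∨ b ≤ a := hl.pairwise.imp fun h => Or.inl h.le
    exact hcomp.forall hx hy hne

lemma isRelSimplex_iff_of_subset {A B A' B' : Set Q} (hA : A' ⊆ A)
    (hB : ∀ x ∈ A', x ∈ B' ↔ x ∈ B) {s : List Q} (hs : ∀ x ∈ s, x ∈ A') (k : ℤ) :
    (s.IsChain (· < ·) ∧ (∀ x ∈ s, x ∈ A) ∧ (∃ x ∈ s, x ∉ B) ∧ (s.length : ℤ) = k) ↔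
      (s.IsChain (· < ·) ∧ (∀ x ∈ s, x ∈ A') ∧ (∃ x ∈ s, x ∉ B') ∧ (s.length : ℤ) = k) := by
  have hB' : (∃ x ∈ s, x ∉ B) ↔ ∃ x ∈ s, x ∉ B' :=
    exists_congr fun x => and_congr_right fun hx => not_congr (hB x (hs x hx)).symm
  rw [hB']
  exact and_congr_right' (and_congr_left' ⟨fun _ => hs, fun _ x hx => hA (hs x hx)⟩)

variable {A B A' B' : Set Q} (hA : A' ⊆ A) (hB : ∀ x ∈ A', x ∈ B' ↔ x ∈ B)

def RelSimp.inclusion {n : ℤ} (m : RelSimp A' B' n) : RelSimp A B n :=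
  ⟨m.1, (isRelSimplex_iff_of_subset hA hB m.2.2.1 _).2 m.2⟩

/-- A face of a simplex of `K_{A'}` lies in `K_B` iff it lies in `K_{B'}`. -/
lemma relDelta_inclusion {n : ℤ} (f : RelCochain A B n) (m : RelSimp A' B' (n + 1)) :
    relDelta A B n f (m.inclusion hA hB) =
      relDelta A' B' n (fun s => f (s.inclusion hA hB)) m := by
  simp only [relDelta, AddMonoidHom.mk'_apply]
  refine Finset.sum_congr rfl fun i _ => congrArg _ ?_
  have hface := isRelSimplex_iff_of_subset hA hB
    (fun x hx => m.2.2.1 x ((List.eraseIdx_sublist m.1 i).subset hx)) (n + 1)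
  split_ifs with h h' h'
  · rfl
  · exact absurd (hface.1 h) h'
  · exact absurd (hface.2 h') h
  · rfl

end RelativePairs

/-- Guarantees that the relative simplices of `(K_A, K_B)` (chains in `A` meeting `A \ B`) are
exactly those of the pairs `(K_{As i}, K_{Bs i})`, each for exactly one `i`. -/
structure IsPairDecomposition {Q ι : Type*} [PartialOrder Q] (A B : Set Q) (As Bs : ι → Set Q) :
    Prop where
  subset : ∀ i, As i ⊆ A
  mem_iff : ∀ i, ∀ x ∈ As i, x ∈ Bs i ↔ x ∈ B
  existsUnique : ∀ x ∈ A, x ∉ B → ∃! i, x ∈ As i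
  mem_of_le_or_ge : ∀ i, ∀ x ∈ As i, x ∉ B → ∀ y ∈ A, x ≤ y ∨ y ≤ x → y ∈ As i

namespace IsPairDecomposition

variable {Q ι : Type*} [PartialOrder Q] {A B : Set Q} {As Bs : ι → Set Q}
  (h : IsPairDecomposition A B As Bs)

lemma inclusion_bijective (n : ℤ) :
    Function.Bijective fun p : Σ i, RelSimp (As i) (Bs i) n =>
      p.2.inclusion (h.subset p.1) (h.mem_iff p.1) := by
  constructor
  · rintro ⟨i, m⟩ ⟨j, m'⟩ hmm
    have hl : m.1 = m'.1 := congrArg Subtype.val hmm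
    obtain ⟨x, hx, hxB⟩ := m.2.2.2.1
    have hxi : x ∈ As i := m.2.2.1 x hx
    have hxj : x ∈ As j := m'.2.2.1 x (hl ▸ hx)
    have hxB' : x ∉ B := fun hB => hxB ((h.mem_iff i x hxi).2 hB)
    exact Sigma.subtype_ext ((h.existsUnique x (h.subset i hxi) hxB').unique hxi hxj) hl
  · intro l
    obtain ⟨x, hx, hxB⟩ := l.2.2.2.1
    obtain ⟨i, hxi, -⟩ := h.existsUnique x (l.2.2.1 x hx) hxB
    have hl : ∀ y ∈ l.1, y ∈ As i := fun y hy =>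
      h.mem_of_le_or_ge i x hxi hxB y (l.2.2.1 y hy) (l.2.1.le_or_ge_of_mem hx hy)
    exact ⟨⟨i, l.1, (isRelSimplex_iff_of_subset (h.subset i) (h.mem_iff i) hl _).1 l.2⟩, rfl⟩

noncomputable def relSimpEquiv (n : ℤ) : (Σ i, RelSimp (As i) (Bs i) n) ≃ RelSimp A B n :=
  Equiv.ofBijective _ (h.inclusion_bijective n)

noncomputable def relCochainEquiv (n : ℤ) :
    RelCochain A B n ≃+ ∀ i, RelCochain (As i) (Bs i) n :=
  ((LinearEquiv.funCongrLeft ℤ ℤ (h.relSimpEquiv n)).trans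
    (LinearEquiv.piCurry ℤ fun _ _ => ℤ)).toAddEquiv

lemma relCochainEquiv_relDelta (n : ℤ) (f : RelCochain A B n) :
    h.relCochainEquiv (n + 1) (relDelta A B n f) =
      AddMonoidHom.piMap (fun i => relDelta (As i) (Bs i) n) (h.relCochainEquiv n f) :=
  funext fun i => funext fun m => relDelta_inclusion (h.subset i) (h.mem_iff i) f m

noncomputable def relCohEquiv (n : ℤ) : relCoh A B n ≃+ ∀ i, relCoh (As i) (Bs i) n :=
  (KerModRange.congr (h.relCochainEquiv _) (h.relCochainEquiv _) (h.relCochainEquiv _)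
    (h.relCochainEquiv_relDelta _) (h.relCochainEquiv_relDelta _)).trans
    (KerModRange.piEquiv _ _)

end IsPairDecomposition

section Blocks

open Function

variable {Q : Type*} [PartialOrder Q] {G : Type*} [Group G] {P : Q → Subgroup G}

/-- `upperClosure S` and `strictUpperClosure P S` are the vertex sets of `K_S` and `K_{>S}`. -/
def strictUpperClosure (P : Q → Subgroup G) (S : Set Q) : Set Q :=
  {V | ∃ U ∈ S, U ≤ V ∧ P U < P V}

def IsUnionOfBlocks (P : Q → Subgroup G) (S : Set Q) : Prop :=
  ∀ ⦃x y⦄, x ≤ y → P x = P y → (x ∈ S ↔ y ∈ S)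

lemma isUnionOfBlocks_eqvGen (J₀ : Q) :
    IsUnionOfBlocks P {J | Relation.EqvGen (fun a b => a ≤ b ∧ P a = P b) J₀ J} :=
  fun x y hxy hP =>
    have hrel := Relation.EqvGen.rel (r := fun a b => a ≤ b ∧ P a = P b) x y ⟨hxy, hP⟩
    ⟨fun hx => hx.trans _ _ _ hrel, fun hy => hy.trans _ _ _ hrel.symm⟩

lemma IsUnionOfBlocks.iUnion {ι : Type*} {Cs : ι → Set Q} (hCs : ∀ i, IsUnionOfBlocks P (Cs i)) :
    IsUnionOfBlocks P (⋃ i, Cs i) := fun x y hxy hP => by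
  simp only [Set.mem_iUnion, hCs _ hxy hP]

lemma strictUpperClosure_mono {S T : Set Q} (hST : S ⊆ T) :
    strictUpperClosure P S ⊆ strictUpperClosure P T :=
  fun _ ⟨U, hU, hUx⟩ => ⟨U, hST hU, hUx⟩

lemma notMem_strictUpperClosure_of_mem {S : Set Q} (hconst : ∀ U ∈ S, ∀ U' ∈ S, P U = P U')
    {x : Q} (hx : x ∈ S) : x ∉ strictUpperClosure P S :=
  fun ⟨U, hU, _, hlt⟩ => hlt.ne (hconst U hU x hx)

lemma IsUnionOfBlocks.mem_of_notMem_strictUpperClosure (hmono : Monotone P) {S : Set Q}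
    (hS : IsUnionOfBlocks P S) {x : Q} (hxA : x ∈ upperClosure S)
    (hxB : x ∉ strictUpperClosure P S) : x ∈ S := by
  obtain ⟨U, hU, hUx⟩ := hxA
  have hP : P U = P x := (hmono hUx).eq_of_not_lt fun hlt => hxB ⟨U, hU, hUx, hlt⟩
  exact (hS hUx hP).1 hU

theorem isPairDecomposition_blocks (hmono : Monotone P) {Ω : Set Q}
    (hconst : ∀ U ∈ Ω, ∀ U' ∈ Ω, P U = P U') {ι : Type*} {Cs : ι → Set Q}
    (hCs : ∀ i, IsUnionOfBlocks P (Cs i)) (hdisj : Pairwise (Disjoint on Cs))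
    (hcover : Ω = ⋃ i, Cs i) :
    IsPairDecomposition (upperClosure Ω : Set Q) (strictUpperClosure P Ω)
      (fun i => upperClosure (Cs i)) (fun i => strictUpperClosure P (Cs i)) := by
  have hCΩ : ∀ i, Cs i ⊆ Ω := fun i => hcover ▸ Set.subset_iUnion Cs i
  have hΩ : IsUnionOfBlocks P Ω := hcover ▸ IsUnionOfBlocks.iUnion hCs
  have hmem : ∀ i, ∀ x ∈ upperClosure (Cs i), x ∉ strictUpperClosure P Ω → x ∈ Cs i :=
    fun i x hxA hxB => (hCs i).mem_of_notMem_strictUpperClosure hmono hxA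
      fun h => hxB (strictUpperClosure_mono (hCΩ i) h)
  refine ⟨fun i => upperClosure_anti (hCΩ i), fun i x hxA => ?_, fun x hxA hxB => ?_,
    fun i x hxA hxB y hyA hxy => ?_⟩
  · refine ⟨fun h => strictUpperClosure_mono (hCΩ i) h, fun h => ?_⟩
    by_contra hxB
    exact notMem_strictUpperClosure_of_mem hconst (hCΩ i
      ((hCs i).mem_of_notMem_strictUpperClosure hmono hxA hxB)) h
  · obtain ⟨i, hi⟩ := Set.mem_iUnion.1
      (hcover ▸ hΩ.mem_of_notMem_strictUpperClosure hmono hxA hxB)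
    exact ⟨i, subset_upperClosure hi, fun j hxj =>
      by_contra fun hne => Set.disjoint_left.1 (hdisj hne) (hmem j x hxj hxB) hi⟩
  · have hx := hmem i x hxA hxB
    rcases hxy with hxy | hyx
    · exact ⟨x, hx, hxy⟩
    · obtain ⟨U, hU, hUy⟩ := hyA
      have hP : P y = P x :=
        (hmono hyx).antisymm ((hconst x (hCΩ i hx) U hU).trans_le (hmono hUy))
      exact subset_upperClosure (((hCs i) hyx hP).2 hx)

end Blocks

theorem stmt_17_general {Q : Type*} [PartialOrder Q] {G : Type*} [Group G]
    (P : Q → Subgroup G) (hmono : Monotone P)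
    (Ω : Set Q) (hconst : ∀ U ∈ Ω, ∀ U' ∈ Ω, P U = P U')
    (r : ℕ) (Cs : Fin r → Set Q)
    (hblocks : ∀ i, ∃ J₀ : Q,
      Cs i = {J | Relation.EqvGen (fun a b => a ≤ b ∧ P a = P b) J₀ J})
    (hdisj : ∀ i j, i ≠ j → Disjoint (Cs i) (Cs j))
    (hcover : Ω = ⋃ i, Cs i)
    (n : ℤ) :
    Nonempty (relCoh {V | ∃ U ∈ Ω, U ≤ V} {V | ∃ U ∈ Ω, U ≤ V ∧ P U < P V} n ≃+
      DirectSum (Fin r) (fun i =>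
        relCoh {V | ∃ U ∈ Cs i, U ≤ V} {V | ∃ U ∈ Cs i, U ≤ V ∧ P U < P V} n)) := by
  have hCs : ∀ i, IsUnionOfBlocks P (Cs i) := fun i => by
    obtain ⟨J₀, hJ₀⟩ := hblocks i
    exact hJ₀ ▸ isUnionOfBlocks_eqvGen J₀
  have h := isPairDecomposition_blocks hmono hconst hCs hdisj hcover
  exact ⟨(h.relCohEquiv n).trans (DirectSum.addEquivProd fun i =>
    relCoh {V | ∃ U ∈ Cs i, U ≤ V} {V | ∃ U ∈ Cs i, U ≤ V ∧ P U < P V} n).symm⟩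

/-- Direct sum decomposition over blocks: if `Ω ⊆ Q` has constant local group and is the
disjoint union of blocks `C₁, …, C_r`, then the relative cohomology of `(K_Ω, K_{>Ω})`
decomposes as the direct sum of the relative cohomologies of the `(K_{C_i}, K_{>C_i})`. -/
theorem stmt_17 {Q : Type*} [PartialOrder Q] [Finite Q] {G : Type*} [Group G]
    (P : Q → Subgroup G) (hmono : Monotone P)
    (Ω : Set Q) (hconst : ∀ U ∈ Ω, ∀ U' ∈ Ω, P U = P U')
    (r : ℕ) (Cs : Fin r → Set Q)
    (hblocks : ∀ i, ∃ J₀ : Q,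
      Cs i = {J | Relation.EqvGen (fun a b => a ≤ b ∧ P a = P b) J₀ J})
    (hdisj : ∀ i j, i ≠ j → Disjoint (Cs i) (Cs j))
    (hcover : Ω = ⋃ i, Cs i)
    (n : ℤ) (hn : 0 ≤ n) :
    Nonempty (relCoh {V | ∃ U ∈ Ω, U ≤ V} {V | ∃ U ∈ Ω, U ≤ V ∧ P U < P V} n ≃+
      DirectSum (Fin r) (fun i =>
        relCoh {V | ∃ U ∈ Cs i, U ≤ V} {V | ∃ U ∈ Cs i, U ≤ V ∧ P U < P V} n)) :=
  stmt_17_general P hmono Ω hconst r Cs hblocks hdisj hcover n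
end
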